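/- Let S: SU(2)^m → ℂ be given by S(X) = Σ_{(a,b)∈E} 2k_{ab} log⟨-n_{ab}| X_a⁻¹ X_b |n_{ba}⟩ (on the domain where the matrix elements are nonzero), with k_{ab} > 0. Then Re S(X) ≤ 0 everywhere, and Re S(X) = 0 if and only if X̂_a n_{ab} = -X̂_b n_{ba} for every edge (a,b) ∈ E. -/

import Mathlib

/-!
The squared modulus of a matrix element is a trace, `|⟨u|Z|w⟩|² = tr(|u⟩⟨u| Z |w⟩⟨w| Z†)`,
and the projector onto the coherent state `|x⟩` is `(1 + x·σ)/2`. Conjugating by `X_a` turns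
`x·σ` into `(X̂_a x)·σ`, so `|⟨-n_ab|X_a⁻¹ X_b|n_ba⟩|² = (1 - X̂_a n_ab · X̂_b n_ba)/2`. Both
rotated vectors are unit vectors, hence every edge contributes `k_ab log` of a number in `(0, 1]`,
which vanishes exactly when `X̂_a n_ab = -X̂_b n_ba`.
-/

open Matrix Complex

/-- The Pauli matrices `σ₁, σ₂, σ₃`. -/
noncomputable def pauli : Fin 3 → Matrix (Fin 2) (Fin 2) ℂ
  | 0 => !![0, 1; 1, 0]
  | 1 => !![0, -Complex.I; Complex.I, 0]
  | 2 => !![1, 0; 0, -1]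

/-- `n·σ` for a vector `n ∈ ℝ³`. -/
noncomputable def dotSigma (n : Fin 3 → ℝ) : Matrix (Fin 2) (Fin 2) ℂ :=
  ∑ i, (n i : ℂ) • pauli i

/-- `v` is a unit-norm `+1`-eigenvector of `n·σ`, i.e. a spin-1/2 coherent state `|n⟩`. -/
def IsCoherentState (n : Fin 3 → ℝ) (v : Fin 2 → ℂ) : Prop :=
  (dotSigma n).mulVec v = v ∧ star v ⬝ᵥ v = 1

open ComplexConjugate

noncomputable def coherentProjector (x : Fin 3 → ℝ) : Matrix (Fin 2) (Fin 2) ℂ :=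
  (2⁻¹ : ℂ) • (1 + dotSigma x)

lemma dotSigma_eq_of (x : Fin 3 → ℝ) :
    dotSigma x = !![(x 2 : ℂ), x 0 - I * x 1; x 0 + I * x 1, -(x 2 : ℂ)] := by
  simp only [dotSigma, pauli, Fin.sum_univ_three]
  ext i j; fin_cases i <;> fin_cases j <;> simp <;> ring

lemma dotSigma_mul_self (x : Fin 3 → ℝ) :
    dotSigma x * dotSigma x = ((x ⬝ᵥ x : ℝ) : ℂ) • 1 := by
  rw [dotSigma_eq_of]
  ext i j
  fin_cases i <;> fin_cases j <;> apply Complex.ext <;>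
    simp [Matrix.mul_apply, dotProduct, Fin.sum_univ_three] <;> ring

lemma trace_coherentProjector_mul (a b : Fin 3 → ℝ) :
    trace (coherentProjector a * coherentProjector b) = (((1 + a ⬝ᵥ b) / 2 : ℝ) : ℂ) := by
  simp only [coherentProjector, dotSigma_eq_of]
  apply Complex.ext <;>
    simp [trace, Matrix.mul_apply, Fin.sum_univ_two, dotProduct, Fin.sum_univ_three] <;> ring

lemma normSq_dotProduct_mulVec (Z : Matrix (Fin 2) (Fin 2) ℂ) (u w : Fin 2 → ℂ) :
    (normSq (star u ⬝ᵥ Z *ᵥ w) : ℂ)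
      = trace (vecMulVec u (star u) * Z * vecMulVec w (star w) * Zᴴ) := by
  rw [normSq_eq_conj_mul_self]
  simp [trace, Matrix.mul_apply, mulVec, dotProduct, vecMulVec, Fin.sum_univ_two]
  ring

namespace IsCoherentState

variable {x : Fin 3 → ℝ} {v : Fin 2 → ℂ}

lemma dotProduct_self (h : IsCoherentState x v) : x ⬝ᵥ x = 1 := by
  have hsq : dotSigma x *ᵥ (dotSigma x *ᵥ v) = ((x ⬝ᵥ x : ℝ) : ℂ) • v := by
    rw [mulVec_mulVec, dotSigma_mul_self, smul_mulVec, one_mulVec]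
  rw [h.1, h.1] at hsq
  have : ((x ⬝ᵥ x : ℝ) : ℂ) = 1 :=
    calc ((x ⬝ᵥ x : ℝ) : ℂ) = (x ⬝ᵥ x : ℝ) * (star v ⬝ᵥ v) := by rw [h.2, mul_one]
      _ = star v ⬝ᵥ (((x ⬝ᵥ x : ℝ) : ℂ) • v) := by rw [dotProduct_smul, smul_eq_mul]
      _ = 1 := by rw [← hsq, h.2]
  exact_mod_cast this

lemma vecMulVec_star (h : IsCoherentState x v) :
    vecMulVec v (star v) = coherentProjector x := by
  obtain ⟨heig, hnorm⟩ := h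
  rw [dotSigma_eq_of] at heig
  have h0 : (x 2 : ℂ) * v 0 + (x 0 - I * x 1) * v 1 = v 0 := by
    simpa [mulVec, dotProduct, Fin.sum_univ_two] using congrFun heig 0
  have h1 : (x 0 + I * x 1 : ℂ) * v 0 - x 2 * v 1 = v 1 := by
    simpa [mulVec, dotProduct, Fin.sum_univ_two, sub_eq_add_neg] using congrFun heig 1
  have hnorm : conj (v 0) * v 0 + conj (v 1) * v 1 = 1 := by
    simpa [dotProduct, Fin.sum_univ_two] using hnorm
  have hc0 : (x 2 : ℂ) * conj (v 0) + (x 0 + I * x 1) * conj (v 1) = conj (v 0) := by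
    simpa using congrArg conj h0
  have hc1 : (x 0 - I * x 1 : ℂ) * conj (v 0) - x 2 * conj (v 1) = conj (v 1) := by
    simpa [sub_eq_add_neg] using congrArg conj h1
  -- each entry of `v v† - (1 + x·σ)/2` combines the eigen-equations, their conjugates and `‖v‖ = 1`
  ext i j
  fin_cases i <;> fin_cases j <;> simp [coherentProjector, vecMulVec, dotSigma_eq_of]
  · linear_combination (1 + x 2 : ℂ) / 2 * hnorm - conj (v 0) / 2 * h0 + v 1 / 2 * hc1
  · linear_combination (x 0 - I * x 1 : ℂ) / 2 * hnorm - conj (v 1) / 2 * h0 - v 0 / 2 * hc1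
  · linear_combination (x 0 + I * x 1 : ℂ) / 2 * hnorm - conj (v 0) / 2 * h1 - v 1 / 2 * hc0
  · linear_combination (1 - x 2 : ℂ) / 2 * hnorm + conj (v 0) / 2 * h0 - v 1 / 2 * hc1

end IsCoherentState

section Conjugation

variable {X : Matrix (Fin 2) (Fin 2) ℂ} (hX : X ∈ unitaryGroup (Fin 2) ℂ)
  {x y : Fin 3 → ℝ} (hxy : X * dotSigma x * star X = dotSigma y)
include hX hxy

lemma conj_coherentProjector : X * coherentProjector x * star X = coherentProjector y := by
  rw [coherentProjector, coherentProjector, Matrix.mul_smul, smul_mul, mul_add, mul_one, add_mul,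
    Unitary.mul_star_self_of_mem hX, hxy]

lemma dotProduct_self_eq_of_conj : y ⬝ᵥ y = x ⬝ᵥ x := by
  have hsq : dotSigma y * dotSigma y = ((x ⬝ᵥ x : ℝ) : ℂ) • 1 := by
    calc dotSigma y * dotSigma y = X * (dotSigma x * (star X * X) * dotSigma x) * star X := by
          simp only [← hxy, Matrix.mul_assoc]
      _ = ((x ⬝ᵥ x : ℝ) : ℂ) • 1 := by
          rw [Unitary.star_mul_self_of_mem hX, mul_one, dotSigma_mul_self, Matrix.mul_smul, mul_one,
            smul_mul, Unitary.mul_star_self_of_mem hX]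
  rw [dotSigma_mul_self] at hsq
  simpa using congrFun (congrFun hsq 0) 0

end Conjugation

lemma normSq_dotProduct_star_mul_mulVec {X₁ X₂ : Matrix (Fin 2) (Fin 2) ℂ}
    (hX₁ : X₁ ∈ unitaryGroup (Fin 2) ℂ) (hX₂ : X₂ ∈ unitaryGroup (Fin 2) ℂ)
    {a b a' b' : Fin 3 → ℝ} {u w : Fin 2 → ℂ} (hu : IsCoherentState a u)
    (hw : IsCoherentState b w) (ha : X₁ * dotSigma a * star X₁ = dotSigma a')
    (hb : X₂ * dotSigma b * star X₂ = dotSigma b') :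
    normSq (star u ⬝ᵥ (star X₁ * X₂) *ᵥ w) = (1 + a' ⬝ᵥ b') / 2 := by
  have htrace : trace (coherentProjector a * (star X₁ * X₂) * coherentProjector b
      * (star X₁ * X₂)ᴴ) = trace (coherentProjector a' * coherentProjector b') := by
    rw [← conj_coherentProjector hX₁ ha, ← conj_coherentProjector hX₂ hb,
      ← star_eq_conjTranspose, star_mul, star_star,
      show X₁ * coherentProjector a * star X₁ * (X₂ * coherentProjector b * star X₂)
        = X₁ * (coherentProjector a * star X₁ * X₂ * coherentProjector b * star X₂) by
          simp only [Matrix.mul_assoc],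
      trace_mul_comm X₁]
    simp only [Matrix.mul_assoc]
  have h := normSq_dotProduct_mulVec (star X₁ * X₂) u w
  rw [hu.vecMulVec_star, hw.vecMulVec_star, htrace, trace_coherentProjector_mul] at h
  exact_mod_cast h

section UnitVectors

variable {ι : Type*} [Fintype ι] {a b : ι → ℝ} (ha : a ⬝ᵥ a = 1) (hb : b ⬝ᵥ b = 1)
include ha hb

lemma dotProduct_sub_self_eq_of_unit : (a - b) ⬝ᵥ (a - b) = 2 * (1 - a ⬝ᵥ b) := by
  rw [sub_dotProduct, dotProduct_sub, dotProduct_sub, ha, hb, dotProduct_comm b a]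
  ring

lemma dotProduct_le_one_of_unit : a ⬝ᵥ b ≤ 1 := by
  have hsq : 0 ≤ (a - b) ⬝ᵥ (a - b) := Finset.sum_nonneg fun i _ => mul_self_nonneg _
  linarith [dotProduct_sub_self_eq_of_unit ha hb]

lemma dotProduct_eq_one_iff_of_unit : a ⬝ᵥ b = 1 ↔ a = b := by
  rw [← sub_eq_zero (a := a), ← dotProduct_self_eq_zero, dotProduct_sub_self_eq_of_unit ha hb]
  constructor <;> intro h <;> linarith

lemma mul_log_norm_nonpos_and_eq_zero_iff {z : ℂ} (hz : z ≠ 0)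
    (hzab : normSq z = (1 + a ⬝ᵥ b) / 2) {c : ℝ} (hc : 0 < c) :
    c * Real.log ‖z‖ ≤ 0 ∧ (c * Real.log ‖z‖ = 0 ↔ a = b) := by
  have hpos : 0 < ‖z‖ := norm_pos_iff.mpr hz
  have hsq : ‖z‖ ^ 2 = (1 + a ⬝ᵥ b) / 2 := by rw [← normSq_eq_norm_sq, hzab]
  constructor
  · have hle : ‖z‖ ≤ 1 := by
      rw [← sq_le_one_iff₀ hpos.le, hsq]
      linarith [dotProduct_le_one_of_unit ha hb]
    exact mul_nonpos_of_nonneg_of_nonpos hc.le (Real.log_nonpos hpos.le hle)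
  · rw [mul_eq_zero, or_iff_right hc.ne', Real.log_eq_zero, ← dotProduct_eq_one_iff_of_unit ha hb,
      ← pow_eq_one_iff_of_nonneg hpos.le two_ne_zero, hsq]
    constructor
    · rintro (h | h | h) <;> linarith
    · intro h
      exact Or.inr (Or.inl (by rw [h]; norm_num))

end UnitVectors

lemma sum_nonpos_and_eq_zero_iff {ι : Type*} {s : Finset ι} {f : ι → ℝ} {p : ι → Prop}
    (h : ∀ i ∈ s, f i ≤ 0 ∧ (f i = 0 ↔ p i)) :
    ∑ i ∈ s, f i ≤ 0 ∧ (∑ i ∈ s, f i = 0 ↔ ∀ i ∈ s, p i) :=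
  ⟨Finset.sum_nonpos fun i hi => (h i hi).1,
    (Finset.sum_eq_zero_iff_of_nonpos fun i hi => (h i hi).1).trans <|
      forall₂_congr fun i hi => (h i hi).2⟩

theorem stmt_13_general {m : ℕ} (E : Finset (Fin m × Fin m))
    (k : Fin m × Fin m → ℝ) (hk : ∀ e ∈ E, 0 < k e)
    (n : Fin m × Fin m → Fin 3 → ℝ)
    (u w : Fin m × Fin m → Fin 2 → ℂ)
    (hu : ∀ e ∈ E, IsCoherentState (-(n e)) (u e))
    (hw : ∀ e ∈ E, IsCoherentState (n e.swap) (w e))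
    (X : Fin m → Matrix (Fin 2) (Fin 2) ℂ)
    (hX : ∀ a, X a ∈ Matrix.specialUnitaryGroup (Fin 2) ℂ)
    (R : Fin m → Matrix (Fin 3) (Fin 3) ℝ)
    (hcover : ∀ a, ∀ x : Fin 3 → ℝ,
      X a * dotSigma x * star (X a) = dotSigma ((R a).mulVec x))
    (hne : ∀ e ∈ E, star (u e) ⬝ᵥ ((X e.1)⁻¹ * X e.2).mulVec (w e) ≠ 0) :
    (∑ e ∈ E, 2 * k e * Complex.log (star (u e) ⬝ᵥ ((X e.1)⁻¹ * X e.2).mulVec (w e))).re ≤ 0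
    ∧ ((∑ e ∈ E,
          2 * k e * Complex.log (star (u e) ⬝ᵥ ((X e.1)⁻¹ * X e.2).mulVec (w e))).re = 0
        ↔ ∀ e ∈ E, (R e.1).mulVec (n e) = -((R e.2).mulVec (n e.swap))) := by
  have hU a : X a ∈ unitaryGroup (Fin 2) ℂ := (mem_specialUnitaryGroup_iff.mp (hX a)).1
  rw [re_sum]
  refine sum_nonpos_and_eq_zero_iff fun e he => ?_
  have hoverlap : normSq (star (u e) ⬝ᵥ ((X e.1)⁻¹ * X e.2) *ᵥ w e)
      = (1 + R e.1 *ᵥ (-n e) ⬝ᵥ R e.2 *ᵥ n e.swap) / 2 := by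
    rw [inv_eq_left_inv (Unitary.star_mul_self_of_mem (hU e.1))]
    exact normSq_dotProduct_star_mul_mulVec (hU _) (hU _) (hu e he) (hw e he) (hcover _ _)
      (hcover _ _)
  have ha := (dotProduct_self_eq_of_conj (hU e.1) (hcover _ _)).trans (hu e he).dotProduct_self
  have hb := (dotProduct_self_eq_of_conj (hU e.2) (hcover _ _)).trans (hw e he).dotProduct_self
  have hre : (2 * k e * log (star (u e) ⬝ᵥ ((X e.1)⁻¹ * X e.2) *ᵥ w e)).re
      = 2 * k e * Real.log ‖star (u e) ⬝ᵥ ((X e.1)⁻¹ * X e.2) *ᵥ w e‖ := by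
    simp [mul_re, log_re]
  rw [hre]
  simpa only [mulVec_neg, neg_eq_iff_eq_neg] using
    mul_log_norm_nonpos_and_eq_zero_iff ha hb (hne e he) hoverlap (by linarith [hk e he])

/-- for the coherent-state action
`S(X) = Σ_{(a,b)∈E} 2k_{ab} log⟨-n_{ab}| X_a⁻¹ X_b |n_{ba}⟩` one has `Re S ≤ 0`, with
equality iff the critical point equations `X̂_a n_{ab} = -X̂_b n_{ba}` hold on every edge. -/
theorem stmt_13 {m : ℕ} (E : Finset (Fin m × Fin m))
    (k : Fin m × Fin m → ℝ) (hk : ∀ e ∈ E, 0 < k e)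
    (n : Fin m × Fin m → Fin 3 → ℝ) (hn : ∀ e ∈ E, ∑ j, n e j ^ 2 = 1)
    (u w : Fin m × Fin m → Fin 2 → ℂ)
    (hu : ∀ e ∈ E, IsCoherentState (-(n e)) (u e))
    (hw : ∀ e ∈ E, IsCoherentState (n e.swap) (w e))
    (X : Fin m → Matrix (Fin 2) (Fin 2) ℂ)
    (hX : ∀ a, X a ∈ Matrix.specialUnitaryGroup (Fin 2) ℂ)
    (R : Fin m → Matrix (Fin 3) (Fin 3) ℝ)
    (hcover : ∀ a, ∀ x : Fin 3 → ℝ,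
      X a * dotSigma x * star (X a) = dotSigma ((R a).mulVec x))
    (hne : ∀ e ∈ E, star (u e) ⬝ᵥ ((X e.1)⁻¹ * X e.2).mulVec (w e) ≠ 0) :
    (∑ e ∈ E, 2 * k e * Complex.log (star (u e) ⬝ᵥ ((X e.1)⁻¹ * X e.2).mulVec (w e))).re ≤ 0
    ∧ ((∑ e ∈ E,
          2 * k e * Complex.log (star (u e) ⬝ᵥ ((X e.1)⁻¹ * X e.2).mulVec (w e))).re = 0
        ↔ ∀ e ∈ E, (R e.1).mulVec (n e) = -((R e.2).mulVec (n e.swap))) :=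
  stmt_13_general E k hk n u w hu hw X hX R hcover hne
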